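/- For every n ≥ 0 and every real number x ≥ 4, the following two identities hold: √x · F_{2n+1}(√(x−4)) = l_{2n+1}(√x), and √x · F_{2n}(√(x−4)) = √(x−4) · f_{2n}(√x). -/
import Mathlib


open Polynomial

/-- Fibonacci polynomials: `F 0 = 0`, `F 1 = 1`, `F n = X * F (n-1) + F (n-2)`. -/
noncomputable def FibPoly : ℕ → ℤ[X]
  | 0 => 0
  | 1 => 1
  | (n + 2) => X * FibPoly (n + 1) + FibPoly n

/-- Fibonacci-type polynomials: `f 0 = 0`, `f 1 = 1`, `f n = X * f (n-1) - f (n-2)`. -/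
noncomputable def fibPoly : ℕ → ℤ[X]
  | 0 => 0
  | 1 => 1
  | (n + 2) => X * fibPoly (n + 1) - fibPoly n

/-- Lucas-type polynomials: `l 0 = 2`, `l 1 = X`, `l n = X * l (n-1) - l (n-2)`. -/
noncomputable def lucPoly : ℕ → ℤ[X]
  | 0 => 2
  | 1 => X
  | (n + 2) => X * lucPoly (n + 1) - lucPoly n

lemma luc_eq_fib_sub (m : ℕ) : lucPoly (m + 1) = fibPoly (m + 2) - fibPoly m := by
  induction m using Nat.twoStepInduction with
  | zero => simp [lucPoly, fibPoly]
  | one => simp [lucPoly, fibPoly]; ring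
  | more k ih1 ih2 =>
    have r3 : fibPoly (k + 2) = X * fibPoly (k + 1) - fibPoly k := rfl
    have lr : lucPoly (k + 3) = X * lucPoly (k + 2) - lucPoly (k + 1) := rfl
    have fr : fibPoly (k + 4) = X * fibPoly (k + 3) - fibPoly (k + 2) := rfl
    show lucPoly (k + 3) = fibPoly (k + 4) - fibPoly (k + 2)
    linear_combination lr + X * ih2 - ih1 - fr + r3

lemma luc_step (m : ℕ) :
    lucPoly (m + 3) = (X ^ 2 - 4) * fibPoly (m + 2) + lucPoly (m + 1) := by
  have h1 := luc_eq_fib_sub (m + 2)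
  have h2 := luc_eq_fib_sub m
  have r1 : fibPoly (m + 4) = X * fibPoly (m + 3) - fibPoly (m + 2) := rfl
  have r2 : fibPoly (m + 3) = X * fibPoly (m + 2) - fibPoly (m + 1) := rfl
  have r3 : fibPoly (m + 2) = X * fibPoly (m + 1) - fibPoly m := rfl
  linear_combination h1 - h2 + r1 + X * r2 + r3

theorem FibPoly_sqrt_identities (n : ℕ) (x : ℝ) (hx : 4 ≤ x) :
    Real.sqrt x * (FibPoly (2 * n + 1)).aeval (Real.sqrt (x - 4)) =
      (lucPoly (2 * n + 1)).aeval (Real.sqrt x) ∧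
    Real.sqrt x * (FibPoly (2 * n)).aeval (Real.sqrt (x - 4)) =
      Real.sqrt (x - 4) * (fibPoly (2 * n)).aeval (Real.sqrt x) := by
  have a2 : Real.sqrt x ^ 2 = x := Real.sq_sqrt (by linarith)
  have b2 : Real.sqrt (x - 4) ^ 2 = x - 4 := Real.sq_sqrt (by linarith)
  set a := Real.sqrt x with ha
  set b := Real.sqrt (x - 4) with hb
  induction n with
  | zero => simp [FibPoly, fibPoly, lucPoly]
  | succ n ih =>
    obtain ⟨ih1, ih2⟩ := ih
    have e1 : 2 * (n + 1) + 1 = 2 * n + 1 + 2 := by ring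
    have e2 : 2 * (n + 1) = 2 * n + 2 := by ring
    have key2 : a * (FibPoly (2 * n + 2)).aeval b = b * (fibPoly (2 * n + 2)).aeval a := by
      have hl := congrArg (aeval a) (luc_eq_fib_sub (2 * n))
      rw [show 2*n+2 = 2*n+1+1 from rfl, FibPoly] at *
      simp only [map_add, map_sub, map_mul, aeval_X] at hl ⊢
      rw [show (2:ℕ)*n+1+1 = 2*n+2 from rfl] at *
      linear_combination b * ih1 + ih2 + b * hl
    have key1 : a * (FibPoly (2 * n + 3)).aeval b = (lucPoly (2 * n + 3)).aeval a := by
      have hl := congrArg (aeval a) (luc_step (2 * n))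
      rw [show 2*n+3 = 2*n+1+2 from rfl, FibPoly]
      simp only [map_add, map_sub, map_mul, map_ofNat, aeval_X, map_pow] at hl ⊢
      rw [show (2:ℕ)*n+1+1 = 2*n+2 from rfl, show (2:ℕ)*n+1+2 = 2*n+3 from rfl] at *
      linear_combination b * key2 + ih1 - hl +
        (aeval a) (fibPoly (2*n+2)) * b2 - (aeval a) (fibPoly (2*n+2)) * a2
    rw [e1, e2]
    exact ⟨by rw [show 2*n+1+2 = 2*n+3 from rfl]; exact key1, key2⟩
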